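/- arXiv:2212.06608 — 2 statements merged into one kernel-verified Lean document; each statement's English description precedes it below -/
import Mathlib

section
/- Let F : P_c(ℝⁿ) → ℝ be of class C¹ with flat derivative δF/δμ that is C¹ in the second variable, and suppose the intrinsic derivative D_μF = D_y(δF/δμ) is bounded by a constant C_Ω on P(Ω) × Ω for a compact convex set Ω ⊂ ℝⁿ. Then F restricted to P(Ω) is Lipschitz with respect to the 2-Wasserstein distance: |F(μ′) − F(μ)| ≤ C_Ω · W₂(μ, μ′) for all μ, μ′ ∈ P(Ω). -/
open MeasureTheory

/-- Squared 2-Wasserstein distance: infimum of transport costs over couplings. -/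
noncomputable def W2sq {n : ℕ} (μ ν : Measure (EuclideanSpace ℝ (Fin n))) : ℝ :=
  sInf { c : ℝ | ∃ π : Measure (EuclideanSpace ℝ (Fin n) × EuclideanSpace ℝ (Fin n)),
    IsProbabilityMeasure π ∧ π.map Prod.fst = μ ∧ π.map Prod.snd = ν ∧
    c = ∫ p, ‖p.1 - p.2‖ ^ 2 ∂π }

/-- 2-Wasserstein distance. -/
noncomputable def W2 {n : ℕ} (μ ν : Measure (EuclideanSpace ℝ (Fin n))) : ℝ :=
  Real.sqrt (W2sq μ ν)

/-!
For every coupling `π` of `μ` and `μ'` and every point `ν` of the segment `[μ, μ']`,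
`∫ δF ν dμ' - ∫ δF ν dμ = ∫ (δF ν y - δF ν x) dπ(x, y)`. Since `Ω` is convex, the mean value
inequality bounds the integrand by `CΩ ‖x - y‖`, and Cauchy–Schwarz bounds `∫ ‖x - y‖ dπ` by the
square root of the quadratic cost of `π`. Integrating over the segment and taking the infimum over
couplings gives the `W₂`-Lipschitz bound.
-/

lemma integral_le_sqrt_integral_sq {α : Type*} [MeasurableSpace α] {π : Measure α}
    [IsProbabilityMeasure π] {f : α → ℝ} (hf : MemLp f 2 π) :
    ∫ x, f x ∂π ≤ √(∫ x, f x ^ 2 ∂π) := by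
  have hsq : (∫ x, f x ∂π) ^ 2 ≤ ∫ x, f x ^ 2 ∂π := by
    have hvar := ProbabilityTheory.variance_nonneg f π
    rw [ProbabilityTheory.variance_eq_sub hf] at hvar
    simpa [Pi.pow_apply] using hvar
  exact (le_abs_self _).trans (Real.abs_le_sqrt hsq)

lemma abs_integral_sub_integral_le_of_coupling {E : Type*} [NormedAddCommGroup E]
    [MeasurableSpace E] [BorelSpace E] [SecondCountableTopology E]
    {Ω : Set E} (hΩ : IsCompact Ω) {g : E → ℝ} (hg : Continuous g) {C : ℝ} (hC : 0 ≤ C)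
    (hLip : ∀ x ∈ Ω, ∀ y ∈ Ω, ‖g y - g x‖ ≤ C * ‖y - x‖)
    {μ ν : Measure E} (hμ : ∀ᵐ x ∂μ, x ∈ Ω) (hν : ∀ᵐ y ∂ν, y ∈ Ω)
    {π : Measure (E × E)} [IsProbabilityMeasure π]
    (h₁ : π.map Prod.fst = μ) (h₂ : π.map Prod.snd = ν) :
    |∫ y, g y ∂ν - ∫ x, g x ∂μ| ≤ C * √(∫ p, ‖p.1 - p.2‖ ^ 2 ∂π) := by
  subst h₁ h₂
  have hΩΩ : ∀ᵐ p ∂π, p.1 ∈ Ω ∧ p.2 ∈ Ω :=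
    (ae_of_ae_map measurable_fst.aemeasurable hμ).and
      (ae_of_ae_map measurable_snd.aemeasurable hν)
  obtain ⟨R, hR⟩ := hΩ.isBounded.exists_norm_le
  obtain ⟨M, hM⟩ := hΩ.exists_bound_of_continuousOn hg.continuousOn
  have hint₁ : Integrable (fun p : E × E => g p.1) π :=
    .of_bound (hg.comp continuous_fst).aestronglyMeasurable M
      (hΩΩ.mono fun p hp => hM p.1 hp.1)
  have hint₂ : Integrable (fun p : E × E => g p.2) π :=
    .of_bound (hg.comp continuous_snd).aestronglyMeasurable M
      (hΩΩ.mono fun p hp => hM p.2 hp.2)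
  have hdist : MemLp (fun p : E × E => ‖p.1 - p.2‖) 2 π := by
    refine .of_bound (continuous_fst.sub continuous_snd).norm.aestronglyMeasurable (R + R) ?_
    filter_upwards [hΩΩ] with p hp
    rw [norm_norm]
    exact (norm_sub_le _ _).trans (add_le_add (hR _ hp.1) (hR _ hp.2))
  rw [integral_map measurable_snd.aemeasurable hg.aestronglyMeasurable,
    integral_map measurable_fst.aemeasurable hg.aestronglyMeasurable,
    ← integral_sub hint₂ hint₁, ← Real.norm_eq_abs]
  calc ‖∫ p, (g p.2 - g p.1) ∂π‖
      ≤ ∫ p, C * ‖p.1 - p.2‖ ∂π := by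
        refine norm_integral_le_of_norm_le ((hdist.integrable one_le_two).const_mul C) ?_
        filter_upwards [hΩΩ] with p hp
        simpa [norm_sub_rev p.1 p.2] using hLip _ hp.1 _ hp.2
    _ ≤ C * √(∫ p, ‖p.1 - p.2‖ ^ 2 ∂π) := by
        rw [integral_const_mul]
        exact mul_le_mul_of_nonneg_left (integral_le_sqrt_integral_sq hdist) hC

lemma isProbabilityMeasure_ofReal_smul_add {α : Type*} [MeasurableSpace α]
    (μ ν : Measure α) [IsProbabilityMeasure μ] [IsProbabilityMeasure ν] {t : ℝ}
    (ht₀ : 0 ≤ t) (ht₁ : t ≤ 1) :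
    IsProbabilityMeasure (ENNReal.ofReal (1 - t) • μ + ENNReal.ofReal t • ν) := by
  constructor
  simp [← ENNReal.ofReal_add (sub_nonneg.2 ht₁) ht₀]

lemma le_mul_sqrt_csInf {S : Set ℝ} (hne : S.Nonempty) (hnonneg : ∀ c ∈ S, 0 ≤ c)
    {x C : ℝ} (hC : 0 ≤ C) (h : ∀ c ∈ S, x ≤ C * √c) : x ≤ C * √(sInf S) := by
  have hmono : Monotone fun c => C * √c := fun _ _ hab =>
    mul_le_mul_of_nonneg_left (Real.sqrt_le_sqrt hab) hC
  rw [hmono.map_csInf_of_continuousAt (by fun_prop) hne ⟨0, hnonneg⟩]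
  exact le_csInf (hne.image _) (Set.forall_mem_image.2 h)

lemma le_mul_W2 {n : ℕ} {μ ν : Measure (EuclideanSpace ℝ (Fin n))}
    [IsProbabilityMeasure μ] [IsProbabilityMeasure ν] {x C : ℝ} (hC : 0 ≤ C)
    (h : ∀ π : Measure (EuclideanSpace ℝ (Fin n) × EuclideanSpace ℝ (Fin n)),
      IsProbabilityMeasure π → π.map Prod.fst = μ → π.map Prod.snd = ν →
      x ≤ C * √(∫ p, ‖p.1 - p.2‖ ^ 2 ∂π)) :
    x ≤ C * W2 μ ν := by
  refine le_mul_sqrt_csInf ?_ ?_ hC ?_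
  · refine ⟨_, μ.prod ν, inferInstance, ?_, ?_, rfl⟩
    · rw [Measure.map_fst_prod, measure_univ, one_smul]
    · rw [Measure.map_snd_prod, measure_univ, one_smul]
  · rintro c ⟨π, -, -, -, rfl⟩
    positivity
  · rintro c ⟨π, hπ, h₁, h₂, rfl⟩
    exact h π hπ h₁ h₂

theorem stmt3_general {n : ℕ} (Ω : Set (EuclideanSpace ℝ (Fin n)))
    (hΩc : IsCompact Ω) (hΩconv : Convex ℝ Ω)
    (F : Measure (EuclideanSpace ℝ (Fin n)) → ℝ)
    (δF : Measure (EuclideanSpace ℝ (Fin n)) → EuclideanSpace ℝ (Fin n) → ℝ)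
    (CΩ : ℝ)
    -- δF is the flat derivative of F on P(Ω):
    (hflat : ∀ μ μ' : Measure (EuclideanSpace ℝ (Fin n)),
      IsProbabilityMeasure μ → IsProbabilityMeasure μ' → μ Ωᶜ = 0 → μ' Ωᶜ = 0 →
      F μ' - F μ = ∫ t in (0:ℝ)..1,
        ((∫ y, δF (ENNReal.ofReal (1 - t) • μ + ENNReal.ofReal t • μ') y ∂μ') -
         ∫ y, δF (ENNReal.ofReal (1 - t) • μ + ENNReal.ofReal t • μ') y ∂μ))
    -- δF(μ,·) is C¹ in y with derivative (the intrinsic derivative) bounded by CΩ on Ω: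
    (hC1 : ∀ μ : Measure (EuclideanSpace ℝ (Fin n)),
      IsProbabilityMeasure μ → μ Ωᶜ = 0 →
      Differentiable ℝ (δF μ) ∧ ∀ y ∈ Ω, ‖fderiv ℝ (δF μ) y‖ ≤ CΩ) :
    ∀ μ μ' : Measure (EuclideanSpace ℝ (Fin n)),
      IsProbabilityMeasure μ → IsProbabilityMeasure μ' → μ Ωᶜ = 0 → μ' Ωᶜ = 0 →
      |F μ' - F μ| ≤ CΩ * W2 μ μ' := by
  intro μ μ' hμ hμ' hμΩ hμ'Ω
  have hμΩ' : ∀ᵐ y ∂μ, y ∈ Ω := mem_ae_iff.2 hμΩ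
  have hμ'Ω' : ∀ᵐ y ∂μ', y ∈ Ω := mem_ae_iff.2 hμ'Ω
  obtain ⟨y₀, hy₀⟩ := hμΩ'.exists
  have hC : 0 ≤ CΩ := (norm_nonneg _).trans ((hC1 μ hμ hμΩ).2 y₀ hy₀)
  refine le_mul_W2 hC fun π hπ h₁ h₂ => ?_
  rw [hflat μ μ' hμ hμ' hμΩ hμ'Ω, ← Real.norm_eq_abs]
  refine (intervalIntegral.norm_integral_le_of_norm_le_const
    (C := CΩ * √(∫ p, ‖p.1 - p.2‖ ^ 2 ∂π)) fun t ht => ?_).trans_eq (by simp)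
  rw [Set.uIoc_of_le zero_le_one] at ht
  have hν := isProbabilityMeasure_ofReal_smul_add μ μ' ht.1.le ht.2
  obtain ⟨hdiff, hbound⟩ := hC1 _ hν (by simp [hμΩ, hμ'Ω])
  exact abs_integral_sub_integral_le_of_coupling hΩc hdiff.continuous hC
    (fun x hx y hy =>
      hΩconv.norm_image_sub_le_of_norm_fderiv_le (fun z _ => hdiff z) hbound hx hy)
    hμΩ' hμ'Ω' h₁ h₂

/-- A `C¹` functional on measures whose intrinsic derivative `D_μ F = D_y (δF/δμ)` is
bounded by `CΩ` on `P(Ω) × Ω` is `CΩ`-Lipschitz on `P(Ω)` w.r.t. `W₂`. -/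
theorem stmt3 {n : ℕ} (Ω : Set (EuclideanSpace ℝ (Fin n)))
    (hΩc : IsCompact Ω) (hΩconv : Convex ℝ Ω)
    (F : Measure (EuclideanSpace ℝ (Fin n)) → ℝ)
    (δF : Measure (EuclideanSpace ℝ (Fin n)) → EuclideanSpace ℝ (Fin n) → ℝ)
    (CΩ : ℝ)
    -- δF is the flat derivative of F on P(Ω):
    (hflat : ∀ μ μ' : Measure (EuclideanSpace ℝ (Fin n)),
      IsProbabilityMeasure μ → IsProbabilityMeasure μ' → μ Ωᶜ = 0 → μ' Ωᶜ = 0 →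
      F μ' - F μ = ∫ t in (0:ℝ)..1,
        ((∫ y, δF (ENNReal.ofReal (1 - t) • μ + ENNReal.ofReal t • μ') y ∂μ') -
         ∫ y, δF (ENNReal.ofReal (1 - t) • μ + ENNReal.ofReal t • μ') y ∂μ))
    -- normalization of the flat derivative:
    (hnorm : ∀ μ : Measure (EuclideanSpace ℝ (Fin n)),
      IsProbabilityMeasure μ → μ Ωᶜ = 0 → ∫ y, δF μ y ∂μ = 0)
    -- δF(μ,·) is C¹ in y with derivative (the intrinsic derivative) bounded by CΩ on Ω:
    (hC1 : ∀ μ : Measure (EuclideanSpace ℝ (Fin n)),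
      IsProbabilityMeasure μ → μ Ωᶜ = 0 →
      Differentiable ℝ (δF μ) ∧ ∀ y ∈ Ω, ‖fderiv ℝ (δF μ) y‖ ≤ CΩ) :
    ∀ μ μ' : Measure (EuclideanSpace ℝ (Fin n)),
      IsProbabilityMeasure μ → IsProbabilityMeasure μ' → μ Ωᶜ = 0 → μ' Ωᶜ = 0 →
      |F μ' - F μ| ≤ CΩ * W2 μ μ' :=
  stmt3_general Ω hΩc hΩconv F δF CΩ hflat hC1
end

section
/- Let I : U → ℝ be a functional on a set of controls, and suppose there exist constants C > 0 such that for all u, ū ∈ U and λ ∈ [0,1], the increment formula I[u + λ(ū−u)] − I[u] = −λ E(u, ū) + R(u, ū, λ) holds with E(u,ū) ≥ 0 (whenever ū is chosen to maximize E) and |R(u,ū,λ)| ≤ C λ². Consider the backtracking iteration: given u^k, pick ū^k maximizing E(u^k, ·), set e^k = E(u^k, ū^k), choose λ^k = max{θ^j : I[u^k + θ^j(ū^k − u^k)] − I[u^k] ≤ −c θ^j e^k} for fixed c, θ ∈ (0,1), and u^{k+1} = u^k + λ^k(ū^k − u^k). If I is bounded below, then e^k → 0 as k → ∞. -/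
open Filter

/-- Convergence of the descent method with backtracking line search:
under the increment formula `I[u+λ(ū−u)] − I[u] = −λ E(u,ū) + O(λ²)`, with `ū^k`
maximizing `E(u^k, ·)`, Armijo step-size selection and `I` bounded below,
the non-extremality measure `e^k = E(u^k, ū^k)` tends to `0`. -/
theorem stmt15 {V : Type*} [NormedAddCommGroup V] [NormedSpace ℝ V]
    (Uset : Set V) (I : V → ℝ) (E : V → V → ℝ) (C : ℝ) (hC : 0 < C)
    (c θ : ℝ) (hc : c ∈ Set.Ioo (0:ℝ) 1) (hθ : θ ∈ Set.Ioo (0:ℝ) 1)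
    -- increment formula with uniform quadratic remainder:
    (hincr : ∀ u ∈ Uset, ∀ v ∈ Uset, ∀ l ∈ Set.Icc (0:ℝ) 1,
      |I (u + l • (v - u)) - I u + l * E u v| ≤ C * l ^ 2)
    (u ubar : ℕ → V) (e lam : ℕ → ℝ) (j : ℕ → ℕ)
    (hu : ∀ k, u k ∈ Uset) (hubar : ∀ k, ubar k ∈ Uset)
    -- ū^k maximizes E(u^k, ·) over Uset, with value e^k ≥ 0:
    (hmax : ∀ k, ∀ v ∈ Uset, E (u k) v ≤ E (u k) (ubar k))
    (he : ∀ k, e k = E (u k) (ubar k)) (hen : ∀ k, 0 ≤ e k)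
    -- backtracking: λ^k = θ^{j^k} is the largest accepted power of θ:
    (hlam : ∀ k, lam k = θ ^ (j k))
    (haccept : ∀ k, I (u k + lam k • (ubar k - u k)) - I (u k) ≤ -(c * lam k * e k))
    (hreject : ∀ k, ∀ m < j k,
      -(c * θ ^ m * e k) < I (u k + θ ^ m • (ubar k - u k)) - I (u k))
    (hupdate : ∀ k, u (k + 1) = u k + lam k • (ubar k - u k))
    -- I is bounded below along the iterates:
    (hbdd : BddBelow (Set.range fun k => I (u k))) :
    Tendsto e atTop (nhds 0) := by
  obtain ⟨hc0, hc1⟩ := hc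
  obtain ⟨hθ0, hθ1⟩ := hθ
  have hlampos : ∀ k, 0 < lam k := fun k => (hlam k) ▸ pow_pos hθ0 _
  have hdesc : ∀ k, c * lam k * e k ≤ I (u k) - I (u (k+1)) := by
    intro k
    have h := haccept k
    rw [hupdate k]
    linarith
  have hnn : ∀ k, 0 ≤ c * lam k * e k := fun k =>
    mul_nonneg (mul_nonneg hc0.le (hlampos k).le) (hen k)
  obtain ⟨B, hB⟩ := hbdd
  have hsum : Summable (fun k => c * lam k * e k) := by
    apply summable_of_sum_range_le hnn
    intro n
    calc ∑ i ∈ Finset.range n, c * lam i * e i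
        ≤ ∑ i ∈ Finset.range n, (I (u i) - I (u (i+1))) :=
          Finset.sum_le_sum (fun i _ => hdesc i)
      _ = I (u 0) - I (u n) := Finset.sum_range_sub' _ _
      _ ≤ I (u 0) - B := by
          have := hB (Set.mem_range_self n)
          linarith
  have hle0 : Tendsto (fun k => c * lam k * e k) atTop (nhds 0) :=
    hsum.tendsto_atTop_zero
  have hle : Tendsto (fun k => lam k * e k) atTop (nhds 0) := by
    have h := hle0.const_mul c⁻¹
    have heq : (fun k => lam k * e k) = fun k => c⁻¹ * (c * lam k * e k) := by
      funext k; field_simp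
    rw [heq]
    simpa using h
  have key : ∀ k, 1 ≤ j k → (1 - c) * e k ≤ C * θ ^ (j k - 1) := by
    intro k hk
    set μ := θ ^ (j k - 1) with hμ
    have hμ0 : 0 < μ := pow_pos hθ0 _
    have hμ1 : μ ≤ 1 := pow_le_one₀ hθ0.le hθ1.le
    have h1 := hincr (u k) (hu k) (ubar k) (hubar k) μ ⟨hμ0.le, hμ1⟩
    rw [← he k] at h1
    have h2 := hreject k (j k - 1) (by omega)
    rw [abs_le] at h1
    by_contra hcon
    push_neg at hcon
    have h3 := mul_lt_mul_of_pos_right hcon hμ0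
    nlinarith [h1.2, h2, hμ0, sq_nonneg μ]
  rw [Metric.tendsto_atTop]
  intro ε hε
  have hδ : 0 < min ε ((1 - c) * θ * ε ^ 2 / C) := by
    apply lt_min hε
    apply div_pos _ hC
    have : 0 < 1 - c := by linarith
    positivity
  obtain ⟨N, hN⟩ := (Metric.tendsto_atTop.mp hle) _ hδ
  refine ⟨N, fun n hn => ?_⟩
  have hN2 := hN n hn
  rw [Real.dist_eq, sub_zero, abs_of_nonneg (mul_nonneg (hlampos n).le (hen n))] at hN2
  rw [Real.dist_eq, sub_zero, abs_of_nonneg (hen n)]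
  by_contra hcon
  push_neg at hcon
  rcases Nat.eq_zero_or_pos (j n) with hj | hj
  · have : lam n = 1 := by rw [hlam n, hj, pow_zero]
    rw [this, one_mul] at hN2
    have := min_le_left ε ((1 - c) * θ * ε ^ 2 / C)
    linarith
  · have hk := key n hj
    have hlamμ : lam n = θ ^ (j n - 1) * θ := by
      rw [hlam n, ← pow_succ]
      congr 1
      omega
    have hmin := min_le_right ε ((1 - c) * θ * ε ^ 2 / C)
    rw [hlamμ] at hN2
    have hμ0 : (0:ℝ) < θ ^ (j n - 1) := pow_pos hθ0 _
    have hcc : (1 - c) * θ * ε ^ 2 / C * C = (1 - c) * θ * ε ^ 2 := by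
      field_simp
    have h4 : θ ^ (j n - 1) * θ * e n * C < (1 - c) * θ * ε ^ 2 := by
      have h5 := lt_of_lt_of_le hN2 hmin
      rw [lt_div_iff₀ hC] at h5
      linarith
    have h6 : (1 - c) * e n * (θ * e n) ≤ C * θ ^ (j n - 1) * (θ * e n) :=
      mul_le_mul_of_nonneg_right hk (mul_nonneg hθ0.le (hen n))
    have h7 : ε * ε ≤ e n * e n := mul_le_mul hcon hcon hε.le (hen n)
    have hpos : 0 < (1 - c) * θ := mul_pos (by linarith) hθ0
    nlinarith [h6, h4, h7, hpos]
end
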